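/- If G is a connected bipartite Deza graph with parameters (n,k,b,a) and b > a, then a = 0, the value −k is an eigenvalue of G, and the child G_B of G is disconnected. -/

import Mathlib

/-! Fix a bipartition `s`. Adjacent vertices lie on opposite sides, so they have no common
neighbour; as `G` has an edge and `a < b`, this forces `a = 0`. Conversely
two vertices with a common neighbour lie on the same side, so, since `b > 0`, every edge of
`G_B` stays inside a side, and the two ends of an edge of `G` lie in different components of
`G_B`. Finally the `±1` vector of the bipartition is an eigenvector of the adjacency matrix of
the `k`-regular graph `G` for the eigenvalue `-k`. -/

open scoped Classical

noncomputable section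

namespace DezaPaper

open SimpleGraph

variable {V : Type*}

/-- `G` is `k`-regular: every vertex has exactly `k` neighbours. -/
def IsRegular (G : SimpleGraph V) (k : ℕ) : Prop :=
  ∀ v, Nat.card (G.neighborSet v) = k

/-- `G` is a Deza graph with parameters `(n, k, b, a)`:  a `k`-regular graph on `n`
vertices, not complete and not edgeless, in which every pair of distinct vertices has
`b` or `a` common neighbours, where `a ≤ b`. -/
def IsDezaWith (G : SimpleGraph V) (n k b a : ℕ) : Prop :=
  Nat.card V = n ∧ IsRegular G k ∧ a ≤ b ∧ G ≠ ⊤ ∧ G ≠ ⊥ ∧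
    ∀ u v : V, u ≠ v →
      Nat.card (G.commonNeighbors u v) = b ∨ Nat.card (G.commonNeighbors u v) = a

/-- The child of `G` associated with the value `c`: two distinct vertices are adjacent
iff they have exactly `c` common neighbours in `G`.  (For a Deza graph with parameters
`(n,k,b,a)`, `child G a` is the child `G_A` and `child G b` is the child `G_B`.) -/
def child (G : SimpleGraph V) (c : ℕ) : SimpleGraph V where
  Adj u v := u ≠ v ∧ Nat.card (G.commonNeighbors u v) = c
  symm := ⟨by
    rintro u v ⟨h1, h2⟩
    refine ⟨h1.symm, ?_⟩
    rwa [SimpleGraph.commonNeighbors_symm]⟩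
  loopless := ⟨fun v h => h.1 rfl⟩

/-- `G` is a strongly regular graph with parameters `(n, k, l, m)`:  a `k`-regular
graph on `n` vertices, not complete and not edgeless, any two adjacent vertices have
`l` common neighbours and any two distinct non-adjacent vertices have `m` common
neighbours. -/
def IsSRGraphWith (G : SimpleGraph V) (n k l m : ℕ) : Prop :=
  Nat.card V = n ∧ IsRegular G k ∧ G ≠ ⊤ ∧ G ≠ ⊥ ∧
    (∀ u v, G.Adj u v → Nat.card (G.commonNeighbors u v) = l) ∧
    (∀ u v, u ≠ v → ¬G.Adj u v → Nat.card (G.commonNeighbors u v) = m)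

/-- `G` is a strongly Deza graph with parameters `(n, k, b, a)`: a Deza graph with
`b > a` whose two children are strongly regular graphs. -/
def IsStronglyDezaWith (G : SimpleGraph V) (n k b a : ℕ) : Prop :=
  IsDezaWith G n k b a ∧ a < b ∧
    (∃ k' l' m', IsSRGraphWith (child G a) n k' l' m') ∧
    (∃ k' l' m', IsSRGraphWith (child G b) n k' l' m')

/-- The real adjacency matrix of `G`. -/
def adjMat [Fintype V] [DecidableEq V] (G : SimpleGraph V) : Matrix V V ℝ :=
  Matrix.of fun u v => if G.Adj u v then (1 : ℝ) else 0

/-- The spectrum of `G`: the multiset of real eigenvalues (with multiplicity) of its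
real adjacency matrix, i.e. the roots of its characteristic polynomial. -/
def spectrum [Fintype V] [DecidableEq V] (G : SimpleGraph V) : Multiset ℝ :=
  (adjMat G).charpoly.roots

/-- `G` is integral: all its eigenvalues are integers. -/
def IsIntegral [Fintype V] [DecidableEq V] (G : SimpleGraph V) : Prop :=
  ∀ θ ∈ spectrum G, ∃ t : ℤ, θ = (t : ℝ)

/-- `G` is bipartite. -/
def IsBipartiteGraph (G : SimpleGraph V) : Prop :=
  ∃ s : Set V, ∀ u v, G.Adj u v → (u ∈ s ↔ v ∉ s)

/-- The distance-`i` graph of `G`: two vertices are adjacent iff they are at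
distance `i` in `G`. -/
def distGraph (G : SimpleGraph V) (i : ℕ) : SimpleGraph V where
  Adj u v := u ≠ v ∧ G.dist u v = i
  symm := ⟨by
    rintro u v ⟨h1, h2⟩
    exact ⟨h1.symm, by rwa [SimpleGraph.dist_comm]⟩⟩
  loopless := ⟨fun v h => h.1 rfl⟩

/-- `G` is a distance-regular graph of diameter `d` with intersection numbers
`ia i`, `ib i`, `ic i`. -/
def IsDRGWith (G : SimpleGraph V) (d : ℕ) (ia ib ic : ℕ → ℕ) : Prop :=
  G.Connected ∧ (∃ u v : V, G.dist u v = d) ∧ (∀ u v : V, G.dist u v ≤ d) ∧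
    ∀ i ≤ d, ∀ u v : V, G.dist u v = i →
      Nat.card {w : V | G.Adj v w ∧ G.dist u w = i + 1} = ib i ∧
      Nat.card {w : V | G.Adj v w ∧ G.dist u w = i} = ia i ∧
      (1 ≤ i → Nat.card {w : V | G.Adj v w ∧ G.dist u w = i - 1} = ic i)

/-- The complete multipartite graph with `t` parts of size `m`. -/
def completeMultipartite (t m : ℕ) : SimpleGraph (Fin t × Fin m) where
  Adj u v := u.1 ≠ v.1
  symm := ⟨fun _ _ h => h.symm⟩
  loopless := ⟨fun _ h => h rfl⟩

/-- `H` is a complete multipartite graph with parts of equal size. -/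
def IsCompleteMultipartiteEq (H : SimpleGraph V) : Prop :=
  ∃ t m : ℕ, Nonempty (H ≃g completeMultipartite t m)

/-- `G` is a divisible design graph with parameters `(n, k, b, a)`: a Deza graph whose
children are a complete multipartite graph with parts of equal size and its
complement. -/
def IsDDGWith (G : SimpleGraph V) (n k b a : ℕ) : Prop :=
  IsDezaWith G n k b a ∧ a < b ∧
    ((IsCompleteMultipartiteEq (child G a) ∧ child G b = (child G a)ᶜ) ∨
     (IsCompleteMultipartiteEq (child G b) ∧ child G a = (child G b)ᶜ))

open scoped Matrix

theorem mem_charpoly_roots_of_mulVec_eq_smul {ι K : Type*} [Fintype ι] [DecidableEq ι] [Field K]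
    {A : Matrix ι ι K} {x : ι → K} {μ : K} (hx : x ≠ 0) (h : A *ᵥ x = μ • x) :
    μ ∈ A.charpoly.roots := by
  rw [Polynomial.mem_roots A.charpoly_monic.ne_zero, ← A.charpoly_toLin',
    ← Module.End.hasEigenvalue_iff_isRoot_charpoly]
  exact Module.End.hasEigenvalue_of_hasEigenvector
    ⟨Module.End.mem_eigenspace_iff.mpr (by simpa using h), hx⟩

theorem adjMat_eq_adjMatrix [Fintype V] [DecidableEq V] (G : SimpleGraph V) :
    adjMat G = G.adjMatrix ℝ :=
  rfl

section Bipartition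

variable {G : SimpleGraph V} {s : Set V}

theorem mem_iff_mem_of_mem_commonNeighbors (hs : ∀ u v, G.Adj u v → (u ∈ s ↔ v ∉ s))
    {u v w : V} (hw : w ∈ G.commonNeighbors u v) : u ∈ s ↔ v ∈ s := by
  have hu := hs u w hw.1
  have hv := hs v w hw.2
  tauto

theorem card_commonNeighbors_eq_zero_of_adj (hs : ∀ u v, G.Adj u v → (u ∈ s ↔ v ∉ s))
    {u v : V} (huv : G.Adj u v) : Nat.card (G.commonNeighbors u v) = 0 := by
  refine Nat.card_eq_zero.mpr (Or.inl ⟨fun ⟨w, hw⟩ => ?_⟩)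
  have hsame := mem_iff_mem_of_mem_commonNeighbors hs hw
  have hopp := hs u v huv
  tauto

theorem mem_iff_mem_of_reachable_child (hs : ∀ u v, G.Adj u v → (u ∈ s ↔ v ∉ s)) {c : ℕ}
    (hc : c ≠ 0) {u v : V} (huv : (child G c).Reachable u v) : u ∈ s ↔ v ∈ s := by
  obtain ⟨p⟩ := huv
  induction p with
  | nil => rfl
  | cons hadj _ ih =>
    obtain ⟨⟨w, hw⟩⟩ := (Nat.card_ne_zero.mp (hadj.2 ▸ hc)).1
    exact (mem_iff_mem_of_mem_commonNeighbors hs hw).trans ih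

def sideSign (s : Set V) (v : V) : ℝ :=
  if v ∈ s then 1 else -1

theorem sideSign_ne_zero [Nonempty V] (s : Set V) : sideSign s ≠ 0 := by
  intro h
  have hv := congrFun h (Classical.arbitrary V)
  unfold sideSign at hv
  split_ifs at hv <;> norm_num at hv

theorem adjMat_mulVec_sideSign [Fintype V] [DecidableEq V] {k : ℕ} (hreg : IsRegular G k)
    (hs : ∀ u v, G.Adj u v → (u ∈ s ↔ v ∉ s)) :
    adjMat G *ᵥ sideSign s = (-(k : ℝ)) • sideSign s := by
  ext v
  have hflip : ∀ u ∈ G.neighborFinset v, sideSign s u = -sideSign s v := by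
    intro u hu
    have hopp := hs v u ((G.mem_neighborFinset v u).mp hu)
    unfold sideSign
    split_ifs <;> simp_all
  have hdeg : (G.neighborFinset v).card = k := by
    rw [card_neighborFinset_eq_degree, ← card_neighborSet_eq_degree, ← Nat.card_eq_fintype_card,
      hreg v]
  rw [adjMat_eq_adjMatrix, adjMatrix_mulVec_apply, Finset.sum_congr rfl hflip, Finset.sum_const,
    hdeg]
  simp

end Bipartition

theorem connected_bipartite_deza_childB_disconnected_general [Fintype V] [DecidableEq V]
    (G : SimpleGraph V) (n k b a : ℕ)
    (hdeza : IsDezaWith G n k b a) (hba : a < b)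
    (hbip : IsBipartiteGraph G) :
    a = 0 ∧ (-(k : ℝ)) ∈ spectrum G ∧ ¬ (child G b).Connected := by
  obtain ⟨s, hs⟩ := hbip
  obtain ⟨-, hreg, -, -, hne_bot, hcard⟩ := hdeza
  obtain ⟨u, v, huv⟩ := ne_bot_iff_exists_adj.mp hne_bot
  have : Nonempty V := ⟨u⟩
  have hzero := card_commonNeighbors_eq_zero_of_adj hs huv
  have ha : a = 0 := by rcases hcard u v huv.ne with h | h <;> omega
  refine ⟨ha, mem_charpoly_roots_of_mulVec_eq_smul (sideSign_ne_zero s)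
    (adjMat_mulVec_sideSign hreg hs), fun hB => ?_⟩
  have hsame := mem_iff_mem_of_reachable_child hs (by omega) (hB.preconnected u v)
  have hopp := hs u v huv
  tauto

/-- If `G` is a connected bipartite Deza graph with parameters
`(n,k,b,a)` and `b > a`, then `a = 0`, the value `-k` is an eigenvalue of `G`, and the
child `G_B` of `G` is disconnected. -/
theorem connected_bipartite_deza_childB_disconnected [Fintype V] [DecidableEq V]
    (G : SimpleGraph V) (n k b a : ℕ)
    (hdeza : IsDezaWith G n k b a) (hba : a < b)
    (hconn : G.Connected) (hbip : IsBipartiteGraph G) :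
    a = 0 ∧ (-(k : ℝ)) ∈ spectrum G ∧ ¬ (child G b).Connected :=
  connected_bipartite_deza_childB_disconnected_general G n k b a hdeza hba hbip

end DezaPaper
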